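/- Let 𝒴 ⊆ ℂⁿ be a p-dimensional subspace, let t ∈ {p, …, n−1} and i ∈ {1, …, p}, assume the smallest Ritz value η_p of A in 𝒴 satisfies η_p > λ_{t+1}, and let f : ℝ → ℝ satisfy |f(λ₁)| ≥ ⋯ ≥ |f(λ_t)| > max_{j ∈ {t+1, …, n}} |f(λⱼ)|. Then 𝒴' = f(A)𝒴 has dimension p, and its i-th largest Ritz value η'_i satisfies: either η'_i ≥ λ_{t−p+i}, or 0 < (λ_{t−p+i} − η'_i)/(η'_i − λ_{t+1}) ≤ ((max_{j ∈ {t+1, …, n}} |f(λⱼ)|)² / |f(λ_{t−p+i})|²) · (λ_{t−p+i} − η_p)/(η_p − λ_{t+1}). -/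

import Mathlib

/-- The Rayleigh quotient `ρ(v) = (vᴴAv)/(vᴴv)` of the Hermitian matrix `A`. -/
noncomputable def rayleigh {n : ℕ} (A : Matrix (Fin n) (Fin n) ℂ)
    (v : EuclideanSpace ℂ (Fin n)) : ℝ :=
  ((inner ℂ v (Matrix.toEuclideanLin A v) : ℂ)).re / ‖v‖ ^ 2

/-- The `i`-th largest Ritz value (1-indexed, `i ∈ {1, …, dim S}`) of the Hermitian
matrix `A` in the subspace `S`, characterized via the Courant–Fischer max-min
principle applied inside `S` (equivalently, the `i`-th largest eigenvalue of
`SᴴAS` for any orthonormal basis matrix `S`). -/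
noncomputable def ritzValue {n : ℕ} (A : Matrix (Fin n) (Fin n) ℂ)
    (S : Submodule ℂ (EuclideanSpace ℂ (Fin n))) (i : ℕ) : ℝ :=
  sSup {r : ℝ | ∃ T : Submodule ℂ (EuclideanSpace ℂ (Fin n)), T ≤ S ∧
    Module.finrank ℂ T = i ∧ ∀ v ∈ T, v ≠ 0 → r ≤ rayleigh A v}

/-- `f(A) = ∑ j, f(λ_j) x_j x_jᴴ` as a linear operator, for eigenvalues `lam`
and orthonormal eigenvectors `x` of `A`. -/
noncomputable def matFun {n : ℕ} (lam : Fin n → ℝ)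
    (x : Fin n → EuclideanSpace ℂ (Fin n)) (f : ℝ → ℝ) :
    EuclideanSpace ℂ (Fin n) →ₗ[ℂ] EuclideanSpace ℂ (Fin n) :=
  ∑ j : Fin n, (f (lam j) : ℂ) • ((innerSL ℂ (x j)).toLinearMap.smulRight (x j))

/-- `y` is a Ritz vector of `A` in `S` associated with the Ritz value `η`:
`y ∈ S`, `y ≠ 0`, `ρ(y) = η` and `Ay − ηy ⊥ S`. -/
def IsRitzVector {n : ℕ} (A : Matrix (Fin n) (Fin n) ℂ)
    (S : Submodule ℂ (EuclideanSpace ℂ (Fin n))) (η : ℝ)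
    (y : EuclideanSpace ℂ (Fin n)) : Prop :=
  y ∈ S ∧ y ≠ 0 ∧ rayleigh A y = η ∧
    ∀ v ∈ S, (inner ℂ v (Matrix.toEuclideanLin A y - (η : ℂ) • y) : ℂ) = 0

/-!
In the eigenbasis, `σ ≤ ρ(u)` iff `∑ⱼ (λⱼ - σ) |⟨xⱼ, u⟩|² ≥ 0`, and `f(A)` multiplies the weight
`|⟨xⱼ, u⟩|²` by `f(λⱼ)²`. Since `f` does not vanish at `λ₁, …, λ_t`, a vector killed by `f(A)`
has weight only on eigenvalues `≤ λ_{t+1} < η_p`, so `f(A)` is injective on `𝒴`.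

Write `q = t - p + i`, `μ = λ_{t+1}`, `G = |f(λ_q)|²`, `K = ν_t²`. The vectors of `𝒴` orthogonal
to `x_{q+1}, …, x_t` form a space `W` of dimension `≥ i`, so `η'_i ≥ σ` as soon as
`ρ(f(A)w) ≥ σ` on `W ∖ 0`. Such a `w` has weight only on eigenvalues `≥ λ_q`, amplified by at
least `G`, and on eigenvalues `≤ μ`, amplified by at most `K`; if a line `c (λ - η_p)` lies below
`(λ - σ) f(λ)²` on both pieces, then `ρ(w) ≥ η_p` forces `ρ(f(A)w) ≥ σ`. When `η_p ≥ λ_q` one may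
take `σ = λ_q`. Otherwise the extremal `σ` is the mean of the two-point distribution at `λ_q` and
`μ` with mean `η_p`, reweighted by `G` and `K`: `σ = (α λ_q + β μ) / (α + β)` with
`α = G (η_p - μ)` and `β = K (λ_q - η_p)`, and `η'_i ≥ σ` is the stated bound on
`(λ_q - η'_i) / (η'_i - μ)`.
-/

open Module Finset

section Subspaces

variable {K V : Type*} [DivisionRing K] [AddCommGroup V] [Module K V]

lemma Submodule.finrank_map_of_injOn {W : Type*} [AddCommGroup W] [Module K W]
    {f : V →ₗ[K] W} {S : Submodule K V} (hf : Set.InjOn f S) :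
    finrank K (S.map f) = finrank K S :=
  (LinearEquiv.ofBijective _ ⟨LinearMap.submoduleMap_injective_of_injOn hf,
    f.submoduleMap_surjective S⟩).finrank_eq.symm

lemma Submodule.exists_le_finrank_eq {S : Submodule K V} {k : ℕ} (hk : k ≤ finrank K S) :
    ∃ T ≤ S, finrank K T = k := by
  obtain ⟨v, hv⟩ := exists_linearIndependent_of_le_finrank hk
  refine ⟨span K (Set.range (S.subtype ∘ v)), ?_, ?_⟩
  · rw [span_le]
    rintro _ ⟨j, rfl⟩
    exact (v j).2
  · rw [finrank_span_eq_card (hv.map' S.subtype S.ker_subtype), Fintype.card_fin]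

end Subspaces

lemma Submodule.finrank_sub_finrank_le_finrank_inf_orthogonal {𝕜 E : Type*} [RCLike 𝕜]
    [NormedAddCommGroup E] [InnerProductSpace 𝕜 E] [FiniteDimensional 𝕜 E]
    (Y K : Submodule 𝕜 E) : finrank 𝕜 Y - finrank 𝕜 K ≤ finrank 𝕜 ↥(Y ⊓ Kᗮ) := by
  have h₁ := Submodule.finrank_sup_add_finrank_inf_eq Y Kᗮ
  have h₂ := K.finrank_add_finrank_orthogonal
  have h₃ := (Y ⊔ Kᗮ).finrank_le
  omega

lemma Orthonormal.exists_orthonormalBasis_coe_eq {𝕜 E ι : Type*} [RCLike 𝕜]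
    [NormedAddCommGroup E] [InnerProductSpace 𝕜 E] [FiniteDimensional 𝕜 E] [Fintype ι]
    {x : ι → E} (hx : Orthonormal 𝕜 x) (hcard : Fintype.card ι = finrank 𝕜 E) :
    ∃ b : OrthonormalBasis ι 𝕜 E, ⇑b = x :=
  ⟨.mk hx (Submodule.eq_top_of_finrank_eq
    ((finrank_span_eq_card hx.linearIndependent).trans hcard)).ge, OrthonormalBasis.coe_mk _ _⟩

section Ritz

variable {n : ℕ} {A : Matrix (Fin n) (Fin n) ℂ}

lemma abs_rayleigh_le (v : EuclideanSpace ℂ (Fin n)) :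
    |rayleigh A v| ≤ ‖Matrix.toEuclideanCLM (𝕜 := ℂ) A‖ := by
  rcases eq_or_ne v 0 with rfl | hv
  · simp [rayleigh]
  have hv2 : 0 < ‖v‖ ^ 2 := by positivity
  rw [rayleigh, abs_div, abs_of_pos hv2, div_le_iff₀ hv2]
  calc |(inner ℂ v (Matrix.toEuclideanLin A v)).re|
      ≤ ‖v‖ * ‖Matrix.toEuclideanCLM (𝕜 := ℂ) A v‖ :=
        (Complex.abs_re_le_norm _).trans (norm_inner_le_norm _ _)
    _ ≤ ‖v‖ * (‖Matrix.toEuclideanCLM (𝕜 := ℂ) A‖ * ‖v‖) := by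
        gcongr
        exact ContinuousLinearMap.le_opNorm _ _
    _ = _ := by ring

lemma le_ritzValue {S T : Submodule ℂ (EuclideanSpace ℂ (Fin n))} {k : ℕ} (hk : k ≠ 0)
    (hTS : T ≤ S) (hT : finrank ℂ T = k) {c : ℝ} (hc : ∀ v ∈ T, v ≠ 0 → c ≤ rayleigh A v) :
    c ≤ ritzValue A S k := by
  refine le_csSup ⟨‖Matrix.toEuclideanCLM (𝕜 := ℂ) A‖, ?_⟩ ⟨T, hTS, hT, hc⟩
  rintro r ⟨T', -, hT', hr⟩
  obtain ⟨v, hv, hv0⟩ := Submodule.exists_mem_ne_zero_of_ne_bot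
    (fun h : T' = ⊥ => hk (by rw [← hT', h, finrank_bot]))
  exact (hr v hv hv0).trans ((le_abs_self _).trans (abs_rayleigh_le v))

lemma ritzValue_le_rayleigh {S : Submodule ℂ (EuclideanSpace ℂ (Fin n))}
    {w : EuclideanSpace ℂ (Fin n)} (hw : w ∈ S) (hw0 : w ≠ 0) :
    ritzValue A S (finrank ℂ S) ≤ rayleigh A w := by
  refine csSup_le ⟨-‖Matrix.toEuclideanCLM (𝕜 := ℂ) A‖, S, le_rfl, rfl,
    fun v _ _ => neg_le_of_abs_le (abs_rayleigh_le v)⟩ ?_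
  rintro r ⟨T, hTS, hT, hr⟩
  exact hr w (Submodule.eq_of_le_of_finrank_eq hTS hT ▸ hw) hw0

lemma le_ritzValue_map {F : EuclideanSpace ℂ (Fin n) →ₗ[ℂ] EuclideanSpace ℂ (Fin n)}
    {Y W : Submodule ℂ (EuclideanSpace ℂ (Fin n))} {k : ℕ} {σ : ℝ} (hk : k ≠ 0)
    (hWY : W ≤ Y) (hF : Set.InjOn F W) (hW : k ≤ finrank ℂ W)
    (hσ : ∀ w ∈ W, w ≠ 0 → σ ≤ rayleigh A (F w)) : σ ≤ ritzValue A (Y.map F) k := by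
  obtain ⟨T, hTW, hT⟩ :=
    Submodule.exists_le_finrank_eq (hW.trans_eq (Submodule.finrank_map_of_injOn hF).symm)
  refine le_ritzValue hk (hTW.trans (Submodule.map_mono hWY)) hT fun v hv hv0 => ?_
  obtain ⟨w, hw, rfl⟩ := Submodule.mem_map.mp (hTW hv)
  exact hσ w hw (by rintro rfl; exact hv0 (map_zero F))

end Ritz

/-- The line `l ↦ c (l - η)` lies below `l ↦ (l - σ) g` on `[lq, ∞)` for every `g ≥ G` and on
`(-∞, μ]` for every `g ≤ K`: the fields are the slope and endpoint conditions. -/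
structure ReweightCertificate (lq μ η G K σ c : ℝ) : Prop where
  le_c : K ≤ c
  c_le : c ≤ G
  μ_le : μ ≤ σ
  le_lq : σ ≤ lq
  at_lq : c * (lq - η) ≤ G * (lq - σ)
  at_μ : K * (σ - μ) ≤ c * (η - μ)

namespace ReweightCertificate

variable {lq μ η G K σ c : ℝ}

lemma mul_sub_le (h : ReweightCertificate lq μ η G K σ c) {l g : ℝ}
    (hl : lq ≤ l ∧ G ≤ g ∨ l ≤ μ ∧ g ≤ K) : c * (l - η) ≤ (l - σ) * g := by
  obtain ⟨h₁, h₂, h₃, h₄, h₅, h₆⟩ := h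
  rcases hl with ⟨hl, hg⟩ | ⟨hl, hg⟩
  · nlinarith [mul_le_mul_of_nonneg_left hg (by linarith : 0 ≤ l - σ)]
  · nlinarith [mul_le_mul_of_nonpos_left hg (by linarith : l - σ ≤ 0)]

lemma of_le (hμlq : μ ≤ lq) (hlqη : lq ≤ η) (hKG : K ≤ G) (hK : 0 ≤ K) :
    ReweightCertificate lq μ η G K lq G :=
  ⟨hKG, le_rfl, hμlq, le_rfl, by nlinarith, by nlinarith⟩

lemma of_lt (hμη : μ < η) (hηlq : η < lq) (hG : 0 < G) (hK : 0 ≤ K) (hKG : K ≤ G) :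
    ReweightCertificate lq μ η G K
      ((G * (η - μ) * lq + K * (lq - η) * μ) / (G * (η - μ) + K * (lq - η)))
      (G * K * (lq - μ) / (G * (η - μ) + K * (lq - η))) := by
  have hden : 0 < G * (η - μ) + K * (lq - η) := by nlinarith
  constructor
  · rw [le_div_iff₀ hden]
    nlinarith [mul_nonneg (mul_nonneg hK (sub_nonneg.2 hηlq.le)) (sub_nonneg.2 hKG)]
  · rw [div_le_iff₀ hden]
    nlinarith [mul_nonneg (mul_nonneg hG.le (sub_nonneg.2 hμη.le)) (sub_nonneg.2 hKG)]
  · rw [le_div_iff₀ hden]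
    nlinarith [mul_nonneg (mul_nonneg hG.le (sub_nonneg.2 hμη.le))
      (sub_nonneg.2 (hμη.trans hηlq).le)]
  · rw [div_le_iff₀ hden]
    nlinarith [mul_nonneg (mul_nonneg hK (sub_nonneg.2 hηlq.le))
      (sub_nonneg.2 (hμη.trans hηlq).le)]
  · field_simp
    exact le_of_eq (by ring)
  · field_simp
    exact le_of_eq (by ring)

end ReweightCertificate

lemma le_or_ratio_le_of_forall_reweightCertificate {lq μ η η' G K : ℝ} (hμη : μ < η)
    (hμlq : μ ≤ lq) (hG : 0 < G) (hK : 0 ≤ K) (hKG : K ≤ G)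
    (hbound : ∀ σ c, ReweightCertificate lq μ η G K σ c → σ ≤ η') :
    lq ≤ η' ∨ (0 < (lq - η') / (η' - μ) ∧
      (lq - η') / (η' - μ) ≤ K / G * ((lq - η) / (η - μ))) := by
  rcases le_or_gt lq η with hlqη | hηlq
  · exact .inl (hbound _ _ (.of_le hμlq hlqη hKG hK))
  rcases le_or_gt lq η' with h | hη'lq
  · exact .inl h
  have hden : 0 < G * (η - μ) + K * (lq - η) := by nlinarith
  have hσ := (div_le_iff₀ hden).1 (hbound _ _ (.of_lt hμη hηlq hG hK hKG))
  have hμη' : μ < η' := by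
    nlinarith [mul_pos (mul_pos hG (sub_pos.2 hμη)) (sub_pos.2 (hμη.trans hηlq))]
  refine .inr ⟨div_pos (by linarith) (by linarith), ?_⟩
  rw [div_mul_div_comm, div_le_div_iff₀ (by linarith) (by positivity)]
  nlinarith

section Spectral

variable {n : ℕ} {b : OrthonormalBasis (Fin n) ℂ (EuclideanSpace ℂ (Fin n))}
  {A : Matrix (Fin n) (Fin n) ℂ} {lam : Fin n → ℝ}

lemma inner_matFun (f : ℝ → ℝ) (u : EuclideanSpace ℂ (Fin n)) (j : Fin n) :
    inner ℂ (b j) (matFun lam b f u) = (f (lam j) : ℂ) * inner ℂ (b j) u := by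
  simp [matFun, orthonormal_iff_ite.mp b.orthonormal]

lemma norm_inner_matFun_sq (f : ℝ → ℝ) (u : EuclideanSpace ℂ (Fin n)) (j : Fin n) :
    ‖inner ℂ (b j) (matFun lam b f u)‖ ^ 2 = f (lam j) ^ 2 * ‖inner ℂ (b j) u‖ ^ 2 := by
  rw [inner_matFun, norm_mul, mul_pow, Complex.norm_real, Real.norm_eq_abs, sq_abs]

variable (heig : ∀ j, Matrix.toEuclideanLin A (b j) = (lam j : ℂ) • b j)
include heig

lemma inner_toEuclideanLin_eq (u : EuclideanSpace ℂ (Fin n)) (j : Fin n) :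
    inner ℂ (b j) (Matrix.toEuclideanLin A u) = (lam j : ℂ) * inner ℂ (b j) u := by
  conv_lhs => rw [← b.sum_repr' u]
  simp [map_sum, heig, orthonormal_iff_ite.mp b.orthonormal]
  ring

lemma rayleigh_sub_mul_norm_sq (u : EuclideanSpace ℂ (Fin n)) (σ : ℝ) :
    (rayleigh A u - σ) * ‖u‖ ^ 2 = ∑ j, (lam j - σ) * ‖inner ℂ (b j) u‖ ^ 2 := by
  have hquad : (inner ℂ u (Matrix.toEuclideanLin A u)).re =
      ∑ j, lam j * ‖inner ℂ (b j) u‖ ^ 2 := by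
    rw [← b.sum_inner_mul_inner, Complex.re_sum]
    refine sum_congr rfl fun j _ => ?_
    rw [inner_toEuclideanLin_eq heig, mul_left_comm, Complex.re_ofReal_mul,
      ← inner_conj_symm u, Complex.conj_mul']
    norm_cast
  rcases eq_or_ne u 0 with rfl | hu
  · simp
  simp only [sub_mul, sum_sub_distrib, ← mul_sum, b.sum_sq_norm_inner_right, rayleigh,
    div_mul_cancel₀ _ (pow_ne_zero 2 (norm_ne_zero_iff.mpr hu)), hquad]

lemma le_rayleigh_iff {u : EuclideanSpace ℂ (Fin n)} (hu : u ≠ 0) {σ : ℝ} :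
    σ ≤ rayleigh A u ↔ 0 ≤ ∑ j, (lam j - σ) * ‖inner ℂ (b j) u‖ ^ 2 := by
  rw [← rayleigh_sub_mul_norm_sq heig, mul_nonneg_iff_of_pos_right (by positivity), sub_nonneg]

lemma matFun_injOn {Y : Submodule ℂ (EuclideanSpace ℂ (Fin n))} {μ : ℝ}
    (hY : ∀ w ∈ Y, w ≠ 0 → μ < rayleigh A w) {f : ℝ → ℝ}
    (hf : ∀ j, μ < lam j → f (lam j) ≠ 0) : Set.InjOn (matFun lam b f) Y := by
  refine LinearMap.disjoint_ker_iff_injOn.mp (Submodule.disjoint_def.mpr fun w hwY hwF => ?_)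
  by_contra hw0
  have hterm : ∀ j, (lam j - μ) * ‖inner ℂ (b j) w‖ ^ 2 ≤ 0 := by
    intro j
    rcases le_or_gt (lam j) μ with h | h
    · exact mul_nonpos_of_nonpos_of_nonneg (sub_nonpos.2 h) (by positivity)
    · have h0 := inner_matFun (b := b) (lam := lam) f w j
      rw [LinearMap.mem_ker.mp hwF, inner_zero_right, zero_eq_mul] at h0
      simp [h0.resolve_left (by exact_mod_cast hf j h)]
  have hpos : 0 < (rayleigh A w - μ) * ‖w‖ ^ 2 :=
    mul_pos (sub_pos.2 (hY w hwY hw0)) (by positivity)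
  rw [rayleigh_sub_mul_norm_sq heig] at hpos
  exact hpos.not_ge (sum_nonpos fun j _ => hterm j)

lemma le_rayleigh_matFun_of_forall {f : ℝ → ℝ} {w : EuclideanSpace ℂ (Fin n)} {η σ c : ℝ}
    (hc : 0 ≤ c) (hw : η ≤ rayleigh A w) (hFw : matFun lam b f w ≠ 0)
    (h : ∀ j, inner ℂ (b j) w ≠ 0 → c * (lam j - η) ≤ (lam j - σ) * f (lam j) ^ 2) :
    σ ≤ rayleigh A (matFun lam b f w) := by
  have hw0 : w ≠ 0 := by rintro rfl; exact hFw (map_zero _)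
  rw [le_rayleigh_iff heig hFw]
  calc (0 : ℝ) ≤ c * ∑ j, (lam j - η) * ‖inner ℂ (b j) w‖ ^ 2 :=
        mul_nonneg hc ((le_rayleigh_iff heig hw0).1 hw)
    _ = ∑ j, c * (lam j - η) * ‖inner ℂ (b j) w‖ ^ 2 := by simp only [mul_sum, mul_assoc]
    _ ≤ ∑ j, (lam j - σ) * ‖inner ℂ (b j) (matFun lam b f w)‖ ^ 2 := by
        refine sum_le_sum fun j _ => ?_
        rw [norm_inner_matFun_sq, ← mul_assoc]
        by_cases hj : inner ℂ (b j) w = 0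
        · simp [hj]
        · exact mul_le_mul_of_nonneg_right (h j hj) (by positivity)

lemma le_ritzValue_map_matFun {f : ℝ → ℝ} {Y : Submodule ℂ (EuclideanSpace ℂ (Fin n))}
    (hF : Set.InjOn (matFun lam b f) Y) {s : Finset (Fin n)} {k : ℕ} (hk : k ≠ 0)
    (hks : k + #s ≤ finrank ℂ Y) {σ c : ℝ} (hc : 0 ≤ c)
    (h : ∀ j ∉ s, c * (lam j - ritzValue A Y (finrank ℂ Y)) ≤ (lam j - σ) * f (lam j) ^ 2) :
    σ ≤ ritzValue A (Y.map (matFun lam b f)) k := by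
  set K := Submodule.span ℂ (s.image b : Set (EuclideanSpace ℂ (Fin n)))
  have hK : finrank ℂ K ≤ #s := (finrank_span_finset_le_card _).trans card_image_le
  refine le_ritzValue_map (W := Y ⊓ Kᗮ) hk inf_le_left (hF.mono inf_le_left)
    (by have := Y.finrank_sub_finrank_le_finrank_inf_orthogonal K; omega) fun w hw hw0 => ?_
  obtain ⟨hwY, hwK⟩ := Submodule.mem_inf.mp hw
  refine le_rayleigh_matFun_of_forall heig hc (ritzValue_le_rayleigh hwY hw0)
    (fun h0 => hw0 (hF hwY Y.zero_mem (h0.trans (map_zero _).symm)))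
    fun j hj => h j fun hjs => hj ?_
  exact Submodule.inner_right_of_mem_orthogonal
    (Submodule.subset_span (mem_coe.2 (mem_image_of_mem b hjs))) hwK

end Spectral

/-- (Theorem 3.4.) If `η_p > λ_{t+1}` and
`|f(λ₁)| ≥ ⋯ ≥ |f(λ_t)| > max_{j>t}|f(λ_j)| = ν_t`, then `𝒴' = f(A)𝒴` has
dimension `p` and its `i`-th largest Ritz value `η'_i` satisfies: either
`η'_i ≥ λ_{t−p+i}`, or
`0 < (λ_{t−p+i} − η'_i)/(η'_i − λ_{t+1}) ≤ (ν_t²/|f(λ_{t−p+i})|²)·(λ_{t−p+i} − η_p)/(η_p − λ_{t+1})`.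
(0-indexed: `lam ⟨j⟩` is `λ_{j+1}`.) -/
theorem stmt13 {n p i t : ℕ} (hi : 1 ≤ i) (hip : i ≤ p)
    (hpt : p ≤ t) (htn : t < n)
    (A : Matrix (Fin n) (Fin n) ℂ)
    (lam : Fin n → ℝ) (hlam : Antitone lam)
    (x : Fin n → EuclideanSpace ℂ (Fin n)) (hx : Orthonormal ℂ x)
    (heig : ∀ j, Matrix.toEuclideanLin A (x j) = (lam j : ℂ) • x j)
    (Y : Submodule ℂ (EuclideanSpace ℂ (Fin n))) (hY : Module.finrank ℂ Y = p)
    (hηp : lam ⟨t, htn⟩ < ritzValue A Y p)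
    (f : ℝ → ℝ) (νt : ℝ)
    (hνt : IsGreatest ((fun j => |f (lam j)|) '' {j : Fin n | t ≤ (j : ℕ)}) νt)
    (hmono : ∀ j k : Fin n, (j : ℕ) ≤ (k : ℕ) → (k : ℕ) < t →
      |f (lam k)| ≤ |f (lam j)|)
    (hgt : νt < |f (lam ⟨t - 1, by omega⟩)|) :
    Module.finrank ℂ (Y.map (matFun lam x f)) = p ∧
    (lam ⟨t - p + i - 1, by omega⟩ ≤ ritzValue A (Y.map (matFun lam x f)) i ∨
      (0 < (lam ⟨t - p + i - 1, by omega⟩ - ritzValue A (Y.map (matFun lam x f)) i) /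
          (ritzValue A (Y.map (matFun lam x f)) i - lam ⟨t, htn⟩) ∧
        (lam ⟨t - p + i - 1, by omega⟩ - ritzValue A (Y.map (matFun lam x f)) i) /
            (ritzValue A (Y.map (matFun lam x f)) i - lam ⟨t, htn⟩) ≤
          νt ^ 2 / |f (lam ⟨t - p + i - 1, by omega⟩)| ^ 2 *
            ((lam ⟨t - p + i - 1, by omega⟩ - ritzValue A Y p) /
              (ritzValue A Y p - lam ⟨t, htn⟩)))) := by
  obtain ⟨b, rfl⟩ := hx.exists_orthonormalBasis_coe_eq (by simp)
  set q : Fin n := ⟨t - p + i - 1, by omega⟩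
  set tn : Fin n := ⟨t, htn⟩
  have hν0 : 0 ≤ νt := by obtain ⟨_, _, rfl⟩ := hνt.1; exact abs_nonneg _
  have hhead : ∀ j : Fin n, j < tn → νt < |f (lam j)| := fun j hj =>
    hgt.trans_le (hmono j ⟨t - 1, by omega⟩ (Nat.le_sub_one_of_lt hj) (by simp; omega))
  have hνq : νt < |f (lam q)| := hhead q (by simp [q, tn, Fin.lt_def]; omega)
  have hinj : Set.InjOn (matFun lam b f) Y :=
    matFun_injOn heig (fun w hw hw0 => hηp.trans_le (hY ▸ ritzValue_le_rayleigh hw hw0))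
      fun j hj => abs_pos.mp (hν0.trans_lt (hhead j (hlam.reflect_lt hj)))
  have hsplit : ∀ j ∉ Ioo q tn, (lam q ≤ lam j ∧ |f (lam q)| ^ 2 ≤ f (lam j) ^ 2) ∨
      (lam j ≤ lam tn ∧ f (lam j) ^ 2 ≤ νt ^ 2) := by
    intro j hj
    rw [← sq_abs (f (lam j))]
    rcases le_or_gt j q with hjq | hjq
    · exact .inl ⟨hlam hjq, pow_le_pow_left₀ (abs_nonneg _) (hmono j q hjq (by simp [q]; omega)) 2⟩
    · have htj : tn ≤ j := by simpa [hjq] using hj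
      exact .inr ⟨hlam htj, pow_le_pow_left₀ (abs_nonneg _) (hνt.2 ⟨j, htj, rfl⟩) 2⟩
  refine ⟨(Submodule.finrank_map_of_injOn hinj).trans hY,
    le_or_ratio_le_of_forall_reweightCertificate hηp (hlam (by simp [q, tn, Fin.le_def]; omega))
      (pow_pos (hν0.trans_lt hνq) 2) (sq_nonneg _) (pow_le_pow_left₀ hν0 hνq.le 2)
      fun σ c hc => ?_⟩
  refine le_ritzValue_map_matFun heig hinj (s := Ioo q tn) (by omega)
    (by rw [Fin.card_Ioo, hY]; simp [q, tn]; omega) (hc.le_c.trans' (sq_nonneg _))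
    fun j hj => ?_
  rw [hY]
  exact hc.mul_sub_le (hsplit j hj)
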